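/- arXiv:2003.03805 — 6 statements merged into one kernel-verified Lean document; each statement's English description precedes it below -/
import Mathlib

section
/- In R = MvPowerSeries (Fin m) ℚ one has the identity Td · (Σ_{r=0}^m (−1)^r · ch_r) = e_m; that is, the Todd class times the alternating sum of the Chern characters of the exterior powers of the dual bundle, written in Chern roots, equals the top elementary symmetric polynomial ∏_{j=1}^m X_j. -/
open Finset

noncomputable section

/-- The element of `MvPowerSeries (Fin m) ℚ` obtained by substituting the variable `X j`
into a one-variable formal power series `f`. -/
def substAt {m : ℕ} (j : Fin m) (f : PowerSeries ℚ) : MvPowerSeries (Fin m) ℚ :=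
  fun n => if n.support ⊆ {j} then PowerSeries.coeff (R := ℚ) (n j) f else 0

/-- The one-variable power series `exp (−X) = Σ_{n ≥ 0} (−X)^n / n!`. -/
def expNeg : PowerSeries ℚ := PowerSeries.mk fun n => (-1) ^ n / n.factorial

/-- `ch m r = Σ_{S ⊆ Fin m, |S| = r} ∏_{j ∈ S} exp (−X j)`, the `r`-th Chern character
term of the exterior powers, written in Chern roots. -/
def ch (m : ℕ) (r : ℕ) : MvPowerSeries (Fin m) ℚ :=
  ∑ S ∈ Finset.powersetCard r (Finset.univ : Finset (Fin m)),
    ∏ j ∈ S, substAt j expNeg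

/-- `esymm m k = Σ_{S ⊆ Fin m, |S| = k} ∏_{j ∈ S} X j`, the `k`-th elementary symmetric
polynomial of the variables, as a multivariate power series. -/
def esymm (m : ℕ) (k : ℕ) : MvPowerSeries (Fin m) ℚ :=
  ∑ S ∈ Finset.powersetCard k (Finset.univ : Finset (Fin m)),
    ∏ j ∈ S, MvPowerSeries.X j

/-- The Todd class `Td = ∏_{j=1}^m φ(X_j)` written in Chern roots, where `φ` is the
Todd series `X/(1 − e^{−X})`. -/
def Td (m : ℕ) (φ : PowerSeries ℚ) : MvPowerSeries (Fin m) ℚ :=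
  ∏ j : Fin m, substAt j φ

/-! Substituting `X j` into a one-variable series is renaming its only variable to `j`, hence a
ring homomorphism; it turns `φ · (1 - e^{-X}) = X` into `φ(X_j) · (1 - e^{-X_j}) = X_j`.
The alternating sum of the `ch_r` is the expansion of `∏_j (1 - e^{-X_j})`, so multiplying
factor by factor gives `∏_j X_j = e_m`. -/

theorem substAt_eq_rename {m : ℕ} (j : Fin m) (f : PowerSeries ℚ) :
    substAt j f = MvPowerSeries.rename (Function.Embedding.punit j) f := by
  ext n
  change (if n.support ⊆ {j} then _ else 0) = _
  split_ifs with h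
  · obtain ⟨k, rfl⟩ : ∃ k, n = Finsupp.single j k := ⟨_, Finsupp.support_subset_singleton.mp h⟩
    have hk : Finsupp.single j k = (Finsupp.single () k).embDomain (Function.Embedding.punit j) :=
      by rw [Finsupp.embDomain_single]; rfl
    rw [Finsupp.single_eq_same, hk, MvPowerSeries.coeff_embDomain_rename,
      PowerSeries.coeff_def Finsupp.single_eq_same]
  · refine (MvPowerSeries.coeff_rename_eq_zero _ _ ?_).symm
    rintro ⟨x, rfl⟩
    refine h (Finsupp.mapDomain_support.trans fun i hi => ?_)
    obtain ⟨_, _, rfl⟩ := mem_image.mp hi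
    exact mem_singleton_self _

theorem substAt_mul_one_sub_eq_X {m : ℕ} {φ g : PowerSeries ℚ} (h : φ * (1 - g) = PowerSeries.X)
    (j : Fin m) : substAt j φ * (1 - substAt j g) = MvPowerSeries.X j := by
  rw [substAt_eq_rename, substAt_eq_rename,
    ← map_one (MvPowerSeries.rename (R := ℚ) (Function.Embedding.punit j)), ← map_sub, ← map_mul, h]
  exact MvPowerSeries.rename_X _ _

theorem Finset.sum_range_neg_one_pow_mul_sum_powersetCard_prod {ι R : Type*} [CommRing R]
    (s : Finset ι) (f : ι → R) :
    ∑ r ∈ range (#s + 1), (-1) ^ r * ∑ t ∈ powersetCard r s, ∏ i ∈ t, f i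
      = ∏ i ∈ s, (1 - f i) := by
  simp only [sub_eq_add_neg, prod_one_add, prod_neg, sum_powerset, mul_sum]
  refine sum_congr rfl fun r _ => sum_congr rfl fun t ht => ?_
  rw [(mem_powersetCard.mp ht).2]

theorem Finset.sum_powersetCard_card {α β : Type*} [AddCommMonoid β] (s : Finset α)
    (g : Finset α → β) : ∑ t ∈ powersetCard #s s, g t = g s := by
  rw [powersetCard_self, sum_singleton]

/-- `Td · (Σ_{r=0}^m (−1)^r · ch_r) = e_m`. -/
theorem td_mul_alternating_sum_ch (m : ℕ) (φ : PowerSeries ℚ)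
    (hφ : φ * (1 - expNeg) = PowerSeries.X) :
    Td m φ * ∑ r ∈ Finset.range (m + 1), (-1 : MvPowerSeries (Fin m) ℚ) ^ r * ch m r
      = esymm m m := by
  have hcard : #(univ : Finset (Fin m)) = m := card_fin m
  calc Td m φ * ∑ r ∈ range (m + 1), (-1) ^ r * ch m r
      = (∏ j, substAt j φ) * ∏ j, (1 - substAt j expNeg) := by
        rw [Td, ← sum_range_neg_one_pow_mul_sum_powersetCard_prod, hcard]; rfl
    _ = ∏ j, MvPowerSeries.X j := by
        rw [← prod_mul_distrib]
        exact prod_congr rfl fun j _ => substAt_mul_one_sub_eq_X hφ j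
    _ = esymm m m := by
        rw [esymm, ← sum_powersetCard_card univ fun S => ∏ j ∈ S, MvPowerSeries.X j, hcard]

end
end

section
/- In R = MvPowerSeries (Fin m) ℚ, the power series Td · (Σ_{r=1}^m (−1)^r · r · ch_r) agrees in total degree ≤ m with −e_{m−1} + (m/2) · e_m. -/
open Finset

noncomputable section

/-- `Td′ = Σ_{j=1}^m φ′(X_j) · ∏_{k ≠ j} φ(X_k)`, the class
`Td′(A) = ∂/∂t Td(A + t·Id)|_{t=0}` written in Chern roots. -/
def Td' (m : ℕ) (φ : PowerSeries ℚ) : MvPowerSeries (Fin m) ℚ :=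
  ∑ j : Fin m, substAt j (PowerSeries.derivative (R := ℚ) φ) *
    ∏ k ∈ Finset.univ.erase j, substAt k φ

/-- Two multivariate power series agree in total degree `≤ p`: their coefficients at every
multi-exponent of total degree `≤ p` coincide. -/
def AgreeUpTo (m p : ℕ) (F G : MvPowerSeries (Fin m) ℚ) : Prop :=
  ∀ n : Fin m →₀ ℕ, (∑ j, n j) ≤ p → MvPowerSeries.coeff (R := ℚ) n F = MvPowerSeries.coeff (R := ℚ) n G

/-- Two multivariate power series agree in total degree `p`: their coefficients at every
multi-exponent of total degree `p` coincide. -/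
def AgreeAt (m p : ℕ) (F G : MvPowerSeries (Fin m) ℚ) : Prop :=
  ∀ n : Fin m →₀ ℕ, (∑ j, n j) = p → MvPowerSeries.coeff (R := ℚ) n F = MvPowerSeries.coeff (R := ℚ) n G


/-!
Write `Eⱼ = exp (−Xⱼ)`. The weighted sum `Σ (−1)^r r ch_r` is the derivative at `t = 1` of
`∏ⱼ (1 − t Eⱼ)`, namely `Σⱼ (−Eⱼ) ∏_{k ≠ j} (1 − Eₖ)`. Since `φ(Xₖ) (1 − Eₖ) = Xₖ` and
`−φ(Xⱼ) Eⱼ = Xⱼ − φ(Xⱼ)`, multiplying by `Td` gives `Σⱼ (Xⱼ − φ(Xⱼ)) ∏_{k ≠ j} Xₖ`.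
As `φ = 1 + X/2 + O(X²)`, this is `−e_{m−1} + (m/2) e_m` plus `e_m` times a series without
constant term, which has no monomials of total degree `≤ m`.
-/

open Polynomial in
theorem sum_neg_one_pow_mul_sum_powersetCard_prod {R ι : Type*} [CommRing R] [Fintype ι]
    [DecidableEq ι] (f : ι → R) :
    ∑ r ∈ Icc 1 (Fintype.card ι), (-1 : R) ^ r * r * ∑ S ∈ powersetCard r univ, ∏ j ∈ S, f j =
      ∑ j, -f j * ∏ k ∈ univ.erase j, (1 - f k) := by
  have hexpand : ∏ k, (1 - C (f k) * X) =
      ∑ S ∈ (univ : Finset ι).powerset, C ((-1) ^ #S * ∏ j ∈ S, f j) * X ^ #S := by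
    rw [prod_sub]
    refine sum_congr rfl fun S _ => ?_
    simp only [prod_const_one, mul_one, prod_mul_distrib, prod_const, map_mul, map_pow, map_neg,
      map_one, map_prod]
    ring
  have hderiv := congrArg (fun p => eval 1 (derivative p)) hexpand
  simp only [derivative_prod_finset, derivative_sum, eval_finsetSum, eval_prod,
    derivative_C_mul_X_pow, eval_mul, eval_C, eval_pow, eval_one, one_pow, mul_one,
    derivative_sub, derivative_one, derivative_C_mul_X, eval_sub, eval_X, eval_neg, zero_sub,
    sum_powerset, card_univ] at hderiv
  have hrange : ∑ r ∈ Icc 1 (Fintype.card ι), (-1 : R) ^ r * r *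
        ∑ S ∈ powersetCard r univ, ∏ j ∈ S, f j =
      ∑ r ∈ range (Fintype.card ι + 1), (-1 : R) ^ r * r *
        ∑ S ∈ powersetCard r univ, ∏ j ∈ S, f j := by
    rw [range_eq_Ico, sum_eq_sum_Ico_succ_bot (Nat.succ_pos _)]
    simp [Ico_add_one_right_eq_Icc]
  simp_rw [hrange, mul_comm (-f _), hderiv, mul_sum]
  refine sum_congr rfl fun r _ => sum_congr rfl fun S hS => ?_
  rw [(mem_powersetCard.mp hS).2]
  ring

theorem powersetCard_card_sub_one_eq_image_erase {α : Type*} [DecidableEq α] {s : Finset α}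
    (hs : s.Nonempty) : powersetCard (#s - 1) s = s.image s.erase := by
  ext T
  simp only [mem_powersetCard, mem_image]
  constructor
  · rintro ⟨hTs, hT⟩
    obtain ⟨a, ha⟩ := card_eq_one.mp (show #(s \ T) = 1 by
      rw [card_sdiff_of_subset hTs, hT]
      have := hs.card_pos
      omega)
    have has : a ∈ s \ T := ha ▸ mem_singleton_self a
    exact ⟨a, (mem_sdiff.mp has).1, by rw [erase_eq, ← ha, Finset.sdiff_sdiff_eq_self hTs]⟩
  · rintro ⟨a, ha, rfl⟩
    exact ⟨erase_subset a s, card_erase_of_mem ha⟩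

theorem exists_X_sub_eq_of_mul_one_sub_expNeg {φ : PowerSeries ℚ}
    (hφ : φ * (1 - expNeg) = PowerSeries.X) :
    ∃ χ, PowerSeries.X - φ =
      PowerSeries.C (-1) + PowerSeries.X * (PowerSeries.C (1 / 2) + PowerSeries.X * χ) := by
  have hcoeff : ∀ n, PowerSeries.coeff n expNeg = (-1) ^ n / n.factorial := fun n =>
    PowerSeries.coeff_mk _ _
  have h0 : PowerSeries.constantCoeff φ = 1 := by
    simpa [PowerSeries.coeff_mul, Finset.Nat.antidiagonal_succ, hcoeff] using
      congrArg (PowerSeries.coeff 1) hφ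
  have h1 : PowerSeries.coeff 1 φ = 1 / 2 := by
    have h2 : -(1 / 2 : ℚ) + PowerSeries.coeff 1 φ = 0 := by
      simpa [PowerSeries.coeff_mul, Finset.Nat.antidiagonal_succ, hcoeff, h0,
        PowerSeries.coeff_X] using congrArg (PowerSeries.coeff 2) hφ
    linarith
  obtain ⟨χ, hχ⟩ : PowerSeries.X ^ 2 ∣
      PowerSeries.X - φ - (PowerSeries.C (-1) + PowerSeries.C (1 / 2) * PowerSeries.X) := by
    rw [PowerSeries.X_pow_dvd_iff]
    intro i hi
    interval_cases i <;> norm_num [h0, h1, PowerSeries.coeff_X]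
  exact ⟨χ, by linear_combination hχ⟩

open MvPowerSeries

section

variable {m : ℕ}

theorem substAt_eq_substAlgHom (j : Fin m) (f : PowerSeries ℚ) :
    substAt j f = PowerSeries.substAlgHom (R := ℚ) (PowerSeries.HasSubst.X j) f := by
  classical
  ext n
  rw [PowerSeries.coe_substAlgHom, PowerSeries.coeff_subst_single]
  exact if_congr Finsupp.support_subset_singleton rfl rfl

theorem substAt_C_add_X_mul (j : Fin m) (a b : ℚ) (χ : PowerSeries ℚ) :
    substAt j (PowerSeries.C a + PowerSeries.X * (PowerSeries.C b + PowerSeries.X * χ)) =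
      C a + X j * (C b + X j * substAt j χ) := by
  have hC : ∀ r : ℚ, PowerSeries.substAlgHom (PowerSeries.HasSubst.X (S := ℚ) j)
      (PowerSeries.C r) = C r := fun r => by
    rw [PowerSeries.coe_substAlgHom, PowerSeries.subst_C]
  simp only [substAt_eq_substAlgHom, map_add, map_mul, hC, PowerSeries.substAlgHom_X]

theorem td_mul_sum_ch {φ : PowerSeries ℚ} (hφ : φ * (1 - expNeg) = PowerSeries.X) :
    Td m φ * ∑ r ∈ Icc 1 m, (-1 : MvPowerSeries (Fin m) ℚ) ^ r *
        (r : MvPowerSeries (Fin m) ℚ) * ch m r =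
      ∑ j, substAt j (PowerSeries.X - φ) * ∏ k ∈ univ.erase j, X k := by
  have hX : ∀ k : Fin m, substAt k φ * (1 - substAt k expNeg) = X k := fun k => by
    simpa [substAt_eq_substAlgHom, PowerSeries.substAlgHom_X] using congrArg (substAt k) hφ
  have hsub : ∀ j : Fin m, substAt j (PowerSeries.X - φ) = substAt j φ * -substAt j expNeg := by
    intro j
    have : PowerSeries.X - φ = φ * -expNeg := by linear_combination -hφ
    simp only [substAt_eq_substAlgHom, this, map_mul, map_neg]
  have hch := sum_neg_one_pow_mul_sum_powersetCard_prod fun j : Fin m => substAt j expNeg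
  rw [Fintype.card_fin] at hch
  simp only [ch]
  rw [hch, mul_sum]
  refine sum_congr rfl fun j _ => ?_
  rw [Td, ← mul_prod_erase univ _ (mem_univ j), hsub,
    prod_congr rfl fun k _ => (hX k).symm, prod_mul_distrib]
  ring

theorem esymm_self : esymm m m = ∏ k : Fin m, X k := by
  have : powersetCard m (univ : Finset (Fin m)) = {univ} := by
    simpa using powersetCard_self (univ : Finset (Fin m))
  rw [esymm, this, sum_singleton]

theorem sum_prod_erase_X (hm : 0 < m) :
    ∑ j : Fin m, ∏ k ∈ univ.erase j, (X k : MvPowerSeries (Fin m) ℚ) = esymm m (m - 1) := by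
  have h := powersetCard_card_sub_one_eq_image_erase (univ_nonempty_iff.mpr ⟨(⟨0, hm⟩ : Fin m)⟩)
  rw [card_univ, Fintype.card_fin] at h
  rw [esymm, h, sum_image (erase_injOn _)]

theorem sum_C_add_X_mul_mul_prod_erase (hm : 0 < m) (c : ℚ)
    (a : Fin m → MvPowerSeries (Fin m) ℚ) :
    ∑ j, (C c + X j * a j) * ∏ k ∈ univ.erase j, X k =
      C c * esymm m (m - 1) + esymm m m * ∑ j, a j := by
  simp_rw [add_mul, sum_add_distrib, ← mul_sum, sum_prod_erase_X hm, esymm_self, mul_sum]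
  congr 1
  refine sum_congr rfl fun j _ => ?_
  rw [← mul_prod_erase univ _ (mem_univ j)]
  ring

theorem lt_order_esymm_self_mul {H : MvPowerSeries (Fin m) ℚ} (hH : constantCoeff H = 0) :
    (m : ℕ∞) < (esymm m m * H).order := by
  have hX : ∀ k : Fin m, 1 ≤ (X k : MvPowerSeries (Fin m) ℚ).order := fun k =>
    one_le_order_iff_constCoeff_eq_zero.mpr (constantCoeff_X k)
  have hprod : (m : ℕ∞) ≤ (esymm m m).order := by
    rw [esymm_self]
    calc (m : ℕ∞) = ∑ _k : Fin m, 1 := by simp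
      _ ≤ _ := (sum_le_sum fun k _ => hX k).trans (le_order_prod _ _)
  calc (m : ℕ∞) < m + 1 := mod_cast Nat.lt_succ_self m
    _ ≤ (esymm m m).order + H.order :=
      add_le_add hprod (one_le_order_iff_constCoeff_eq_zero.mpr hH)
    _ ≤ _ := le_order_mul

theorem agreeUpTo_add_of_lt_order {p : ℕ} (F : MvPowerSeries (Fin m) ℚ)
    {G : MvPowerSeries (Fin m) ℚ} (hG : (p : ℕ∞) < G.order) : AgreeUpTo m p (F + G) F := by
  intro n hn
  rw [map_add, coeff_of_lt_order (f := G), add_zero]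
  rw [Finsupp.degree_eq_sum]
  exact lt_of_le_of_lt (mod_cast hn) hG

end

/-- `Td · (Σ_{r=1}^m (−1)^r · r · ch_r)` agrees in total degree `≤ m` with
`−e_{m−1} + (m/2) · e_m`.  (The term `e_{m−1}` presupposes `1 ≤ m`.) -/
theorem td_mul_weighted_sum_ch (m : ℕ) (hm : 0 < m) (φ : PowerSeries ℚ)
    (hφ : φ * (1 - expNeg) = PowerSeries.X) :
    AgreeUpTo m m
      (Td m φ * ∑ r ∈ Finset.Icc 1 m,
        (-1 : MvPowerSeries (Fin m) ℚ) ^ r * (r : MvPowerSeries (Fin m) ℚ) * ch m r)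
      (-(esymm m (m - 1)) + MvPowerSeries.C (σ := Fin m) (R := ℚ) ((m : ℚ) / 2) * esymm m m) := by
  obtain ⟨χ, hχ⟩ := exists_X_sub_eq_of_mul_one_sub_expNeg hφ
  set G : MvPowerSeries (Fin m) ℚ := ∑ j, X j * substAt j χ
  have hG : constantCoeff G = 0 := by simp [G]
  have hsum : ∑ j : Fin m, (C (1 / 2) + X j * substAt j χ) = C ((m : ℚ) / 2) + G := by
    rw [sum_add_distrib, sum_const, card_univ, Fintype.card_fin, nsmul_eq_mul,
      ← map_natCast C, ← map_mul, mul_one_div]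
  rw [td_mul_sum_ch hφ]
  simp_rw [hχ, substAt_C_add_X_mul]
  rw [sum_C_add_X_mul_mul_prod_erase hm, hsum, map_neg, map_one, neg_one_mul, mul_add,
    mul_comm (esymm m m), ← add_assoc]
  exact agreeUpTo_add_of_lt_order _ (lt_order_esymm_self_mul hG)
end
end

section
/- Let A be a commutative ring, m ∈ ℕ, and x : Fin m → A. Then Σ_{r=1}^m (−1)^r · r · e_r(x) = − Σ_{j ∈ Fin m} x_j · ∏_{k ≠ j} (1 − x_k). -/
/-!
Differentiate `∏ⱼ (1 - xⱼ t) = ∑ᵣ (-1)ʳ eᵣ(x) tʳ` in `A[t]` and evaluate at `t = 1`.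
-/

open Finset

/-- `e_r(x) = Σ_{S ⊆ Fin m, |S| = r} ∏_{j ∈ S} x_j`, the `r`-th elementary symmetric
polynomial of the values `x_1, …, x_m` (with `e_0(x) = 1`). -/
def esymmVal {A : Type*} [CommRing A] {m : ℕ} (x : Fin m → A) (r : ℕ) : A :=
  ∑ S ∈ Finset.powersetCard r (Finset.univ : Finset (Fin m)), ∏ j ∈ S, x j

open Polynomial

theorem prod_one_sub_C_mul_X_eq_sum_esymmVal {A : Type*} [CommRing A] {m : ℕ} (x : Fin m → A) :
    ∏ j, (1 - C (x j) * X) = ∑ r ∈ range (m + 1), C ((-1) ^ r * esymmVal x r) * X ^ r := by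
  have prod_neg_C_mul_X : ∀ t : Finset (Fin m),
      ∏ j ∈ t, -(C (x j) * X) = C ((-1) ^ #t * ∏ j ∈ t, x j) * X ^ #t := fun t => by
    simp only [prod_neg, prod_mul_distrib, prod_const, ← map_prod, map_mul, map_pow, map_neg,
      map_one, mul_assoc]
  simp_rw [sub_eq_add_neg, prod_one_add, prod_neg_C_mul_X, sum_powerset, card_univ,
    Fintype.card_fin, esymmVal, mul_sum, map_sum, sum_mul]
  refine sum_congr rfl fun r _ => sum_congr rfl fun t ht => ?_
  rw [(mem_powersetCard.mp ht).2]

theorem eval_one_derivative_sum_C_mul_X_pow {R : Type*} [CommSemiring R] (n : ℕ) (c : ℕ → R) :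
    eval 1 (derivative (∑ r ∈ range n, C (c r) * X ^ r)) = ∑ r ∈ range n, c r * r := by
  simp only [derivative_sum, derivative_C_mul_X_pow, eval_finsetSum, eval_mul, eval_C, eval_pow,
    eval_X, one_pow, mul_one]

theorem eval_one_derivative_prod_one_sub_C_mul_X {A : Type*} [CommRing A] {ι : Type*}
    [DecidableEq ι] (s : Finset ι) (x : ι → A) :
    eval 1 (derivative (∏ j ∈ s, (1 - C (x j) * X)))
      = -∑ j ∈ s, x j * ∏ k ∈ s.erase j, (1 - x k) := by
  rw [derivative_prod_finset, eval_finsetSum, ← sum_neg_distrib]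
  refine sum_congr rfl fun j _ => ?_
  simp only [eval_mul, eval_prod, derivative_sub, derivative_one, derivative_C_mul_X, eval_sub,
    eval_one, eval_C, eval_X, mul_one, zero_sub, eval_neg]
  ring

/-- `Σ_{r=1}^m (−1)^r · r · e_r(x) = − Σ_j x_j · ∏_{k ≠ j} (1 − x_k)`. -/
theorem alternating_weighted_sum_esymm {A : Type*} [CommRing A] (m : ℕ) (x : Fin m → A) :
    ∑ r ∈ Finset.Icc 1 m, (-1 : A) ^ r * (r : A) * esymmVal x r
      = -∑ j : Fin m, x j * ∏ k ∈ Finset.univ.erase j, (1 - x k) := by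
  calc ∑ r ∈ Icc 1 m, (-1 : A) ^ r * (r : A) * esymmVal x r
      = ∑ r ∈ range (m + 1), (-1) ^ r * esymmVal x r * r := by
        rw [range_eq_Ico, sum_eq_sum_Ico_succ_bot (by omega), zero_add, Ico_add_one_right_eq_Icc,
          Nat.cast_zero, mul_zero, zero_add]
        exact sum_congr rfl fun r _ => by ring
    _ = eval 1 (derivative (∑ r ∈ range (m + 1), C ((-1) ^ r * esymmVal x r) * X ^ r)) :=
        (eval_one_derivative_sum_C_mul_X_pow _ _).symm
    _ = eval 1 (derivative (∏ j, (1 - C (x j) * X))) := by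
        rw [prod_one_sub_C_mul_X_eq_sum_esymmVal]
    _ = -∑ j : Fin m, x j * ∏ k ∈ univ.erase j, (1 - x k) :=
        eval_one_derivative_prod_one_sub_C_mul_X _ _
end

section
/- Let A be a commutative ring, m ∈ ℕ, and x : Fin m → A. Then Σ_{r=2}^m (−1)^r · r(r−1) · e_r(x) = Σ_{(j,k), j ≠ k} x_j · x_k · ∏_{l ∉ {j,k}} (1 − x_l), where the sum on the right runs over all ordered pairs of distinct indices j, k ∈ Fin m. -/
open Finset

/-!
Expanding `∏_{l ∉ {j, k}} (1 - x_l)` and multiplying by `x_j x_k` turns the term of the pair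
`(j, k)` into `Σ_{T ⊇ {j, k}} (-1)^|T| ∏_{l ∈ T} x_l`. Exchanging the order of summation, a
subset `T` is counted once for each of the `|T| (|T| - 1)` ordered pairs of distinct elements
it contains, and grouping the subsets by cardinality gives the left-hand side.
-/

namespace Finset

variable {ι A : Type*} [DecidableEq ι] [CommRing A]

theorem neg_one_pow_card_mul_prod_mul_prod_sdiff_one_sub {s t : Finset ι} (x : ι → A)
    (h : t ⊆ s) :
    (-1) ^ #t * (∏ i ∈ t, x i) * ∏ i ∈ s \ t, (1 - x i)
      = ∑ T ∈ Icc t s, (-1) ^ #T * ∏ i ∈ T, x i := by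
  have disjoint_of_mem : ∀ U ∈ (s \ t).powerset, Disjoint t U := fun U hU =>
    disjoint_of_subset_right (mem_powerset.1 hU) disjoint_sdiff
  have union_injOn : Set.InjOn (t ∪ ·) ((s \ t).powerset : Set (Finset ι)) := by
    intro U hU V hV hUV
    rw [← union_sdiff_cancel_left (disjoint_of_mem U hU),
      ← union_sdiff_cancel_left (disjoint_of_mem V hV)]
    exact congrArg (· \ t) hUV
  rw [Icc_eq_image_powerset h, sum_image union_injOn, prod_sub, mul_sum]
  refine sum_congr rfl fun U hU => ?_
  have hdisj := disjoint_of_mem U hU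
  rw [card_union_of_disjoint hdisj, prod_union hdisj, pow_add, prod_const_one, mul_one]
  ring

theorem sum_sum_erase_sum_Icc_pair {M : Type*} [AddCommMonoid M] (s : Finset ι)
    (f : Finset ι → M) :
    ∑ j ∈ s, ∑ k ∈ s.erase j, ∑ T ∈ Icc {j, k} s, f T
      = ∑ T ∈ s.powerset, (#T * (#T - 1)) • f T := by
  calc ∑ j ∈ s, ∑ k ∈ s.erase j, ∑ T ∈ Icc {j, k} s, f T
      = ∑ j ∈ s, ∑ T ∈ Icc {j} s, ∑ k ∈ T.erase j, f T := by
        refine sum_congr rfl fun j _ => sum_comm' fun k T => ?_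
        simp only [mem_Icc, mem_erase, insert_subset_iff, singleton_subset_iff]
        tauto
    _ = ∑ T ∈ s.powerset, ∑ j ∈ T, ∑ k ∈ T.erase j, f T := by
        refine sum_comm' fun j T => ?_
        simp only [mem_Icc, mem_powerset, singleton_subset_iff]
        exact ⟨fun ⟨_, hj, hT⟩ => ⟨hj, hT⟩, fun ⟨hj, hT⟩ => ⟨hT hj, hj, hT⟩⟩
    _ = ∑ T ∈ s.powerset, (#T * (#T - 1)) • f T := by
        refine sum_congr rfl fun T _ => ?_
        rw [sum_congr rfl fun j hj => by rw [sum_const, card_erase_of_mem hj], sum_const,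
          smul_smul]

end Finset

theorem sum_powerset_univ_eq_sum_range_esymmVal {A : Type*} [CommRing A] {m : ℕ}
    (x : Fin m → A) (c : ℕ → A) :
    ∑ T ∈ (univ : Finset (Fin m)).powerset, c #T * ∏ i ∈ T, x i
      = ∑ r ∈ range (m + 1), c r * esymmVal x r := by
  rw [sum_powerset, card_univ, Fintype.card_fin]
  refine sum_congr rfl fun r _ => ?_
  rw [esymmVal, mul_sum]
  exact sum_congr rfl fun T hT => by rw [(mem_powersetCard.1 hT).2]

/-- `Σ_{r=2}^m (−1)^r · r(r−1) · e_r(x)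
      = Σ_{(j,k), j ≠ k} x_j · x_k · ∏_{l ∉ {j,k}} (1 − x_l)`,
where the sum on the right runs over all ordered pairs of distinct indices. -/
theorem alternating_second_weighted_sum_esymm {A : Type*} [CommRing A] (m : ℕ)
    (x : Fin m → A) :
    ∑ r ∈ Finset.Icc 2 m, (-1 : A) ^ r * (r : A) * ((r : A) - 1) * esymmVal x r
      = ∑ j : Fin m, ∑ k ∈ Finset.univ.erase j,
          x j * x k * ∏ l ∈ (Finset.univ.erase j).erase k, (1 - x l) := by
  have pair_term : ∀ j, ∀ k ∈ (univ : Finset (Fin m)).erase j,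
      x j * x k * ∏ l ∈ (univ.erase j).erase k, (1 - x l)
        = ∑ T ∈ Icc {j, k} univ, (-1) ^ #T * ∏ i ∈ T, x i := by
    intro j k hk
    have hkj := ne_of_mem_erase hk
    rw [← neg_one_pow_card_mul_prod_mul_prod_sdiff_one_sub x (subset_univ _),
      card_pair hkj.symm, prod_pair hkj.symm, sdiff_insert, sdiff_singleton_eq_erase,
      erase_right_comm]
    ring
  have cast_weight : ∀ n : ℕ, ((n * (n - 1) : ℕ) : A) = n * (n - 1) := by
    rintro (_ | n) <;> simp
  rw [sum_congr rfl fun j _ => sum_congr rfl (pair_term j), sum_sum_erase_sum_Icc_pair]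
  simp_rw [nsmul_eq_mul, cast_weight, ← mul_assoc]
  rw [sum_powerset_univ_eq_sum_range_esymmVal x fun r => (r : A) * (r - 1) * (-1) ^ r]
  refine (sum_subset (fun r hr => ?_) fun r hr hr2 => ?_).trans (sum_congr rfl fun r _ => ?_)
  · simp only [mem_Icc, mem_range] at hr ⊢
    omega
  · obtain rfl | rfl : r = 0 ∨ r = 1 := by simp only [mem_Icc, mem_range] at hr hr2; omega
    all_goals simp
  · ring
end

section
/- Let r, s ∈ ℕ with s ≤ r, let d ∈ ℝ with d ≠ 0, and let μ : Fin (s+1) → ℝ satisfy μ_j + d ≠ 0 for every j and Σ_j μ_j = −(r+1)·d. Then Σ_{J ⊆ Fin (s+1)} (∏_{j ∈ J} (−μ_j/(μ_j + d))) · (r + 1 − |J|) = 0, where the sum runs over all subsets J of Fin (s+1) and r + 1 − |J| is taken as an integer (note |J| ≤ s + 1 ≤ r + 1). -/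
/-!
Put `a j = -μ j / (μ j + d)`. Counting pairs `(i, J)` with `i ∈ J` turns the weighted sum into
`∏ j (1 + a j) * (r + 1 - ∑ j a j / (1 + a j))`, and `a j / (1 + a j) = -μ j / d` sums to `r + 1`
by the hypothesis on `∑ j μ j`.
-/

open Finset

section CommRing
variable {ι R : Type*} [DecidableEq ι] [CommRing R]

theorem sum_powerset_filter_mem_prod {s : Finset ι} {i : ι} (hi : i ∈ s) (a : ι → R) :
    ∑ t ∈ s.powerset with i ∈ t, ∏ j ∈ t, a j = a i * ∏ j ∈ s.erase i, (1 + a j) := by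
  have hi' : i ∉ s.erase i := notMem_erase i s
  rw [← insert_erase hi, sum_filter, sum_powerset_insert hi', erase_insert hi', prod_one_add,
    mul_sum]
  have hout : ∀ t ∈ (s.erase i).powerset, i ∉ t := fun t ht hit => hi' (mem_powerset.1 ht hit)
  rw [sum_eq_zero fun t ht => if_neg (hout t ht), zero_add]
  exact sum_congr rfl fun t ht => by rw [if_pos (mem_insert_self i t), prod_insert (hout t ht)]

theorem sum_powerset_prod_mul_card (s : Finset ι) (a : ι → R) :
    ∑ t ∈ s.powerset, (∏ j ∈ t, a j) * (#t : R) = ∑ i ∈ s, a i * ∏ j ∈ s.erase i, (1 + a j) := by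
  calc ∑ t ∈ s.powerset, (∏ j ∈ t, a j) * (#t : R)
      = ∑ t ∈ s.powerset, ∑ i ∈ s, if i ∈ t then ∏ j ∈ t, a j else 0 := by
        refine sum_congr rfl fun t ht => ?_
        rw [← sum_filter, filter_mem_eq_inter, inter_eq_right.2 (mem_powerset.1 ht), sum_const,
          nsmul_eq_mul, mul_comm]
    _ = ∑ i ∈ s, ∑ t ∈ s.powerset with i ∈ t, ∏ j ∈ t, a j := by
        rw [sum_comm]; simp only [sum_filter]
    _ = ∑ i ∈ s, a i * ∏ j ∈ s.erase i, (1 + a j) :=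
        sum_congr rfl fun i hi => sum_powerset_filter_mem_prod hi a

end CommRing

theorem sum_powerset_prod_mul_sub_card {ι K : Type*} [DecidableEq ι] [Field K] (s : Finset ι)
    (a : ι → K) (ha : ∀ i ∈ s, 1 + a i ≠ 0) (c : K) :
    ∑ t ∈ s.powerset, (∏ j ∈ t, a j) * (c - #t) =
      (∏ j ∈ s, (1 + a j)) * (c - ∑ i ∈ s, a i / (1 + a i)) := by
  simp only [mul_sub, sum_sub_distrib, ← sum_mul, ← prod_one_add, sum_powerset_prod_mul_card,
    mul_sum]
  congr 1
  refine sum_congr rfl fun i hi => ?_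
  rw [← mul_prod_erase s _ hi]
  field_simp [ha i hi]

theorem weighted_euler_char_vanishing_general (r s : ℕ) (d : ℝ) (hd : d ≠ 0)
    (μ : Fin (s + 1) → ℝ) (hμ : ∀ j, μ j + d ≠ 0)
    (hsum : ∑ j, μ j = -((r : ℝ) + 1) * d) :
    ∑ J ∈ (Finset.univ : Finset (Fin (s + 1))).powerset,
        (∏ j ∈ J, (-(μ j) / (μ j + d))) * (((r : ℤ) + 1 - (J.card : ℤ) : ℤ) : ℝ)
      = 0 := by
  have h_one_add (j) : 1 + -μ j / (μ j + d) = d / (μ j + d) := by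
    field_simp [hμ j]; ring
  have h_ratio (j) : -μ j / (μ j + d) / (1 + -μ j / (μ j + d)) = -μ j / d := by
    rw [h_one_add, div_div_div_cancel_right₀ (hμ j)]
  have h_ratio_sum : ∑ j, -μ j / (μ j + d) / (1 + -μ j / (μ j + d)) = (r : ℝ) + 1 := by
    rw [sum_congr rfl fun j _ => h_ratio j, ← sum_div, sum_neg_distrib, hsum]
    field_simp
  push_cast
  rw [sum_powerset_prod_mul_sub_card _ _ (fun j _ => by simpa [h_one_add] using ⟨hd, hμ j⟩),
    h_ratio_sum, sub_self, mul_zero]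

/-- Vanishing of the weighted Euler characteristic `χ_d(Z, γ_Z) = 0` of a `ℂP^r`-fiber:
if the multiplicities `μ_j` of the `s+1` divisor components satisfy `μ_j + d ≠ 0` and
`Σ_j μ_j = −(r+1)·d`, then
`Σ_{J ⊆ Fin (s+1)} (∏_{j ∈ J} (−μ_j/(μ_j + d))) · (r + 1 − |J|) = 0`,
the factor `r + 1 − |J|` (the Euler characteristic `χ(ℂP^{r−|J|})` of the stratum `D_J`)
being taken as an integer. -/
theorem weighted_euler_char_vanishing (r s : ℕ) (hs : s ≤ r) (d : ℝ) (hd : d ≠ 0)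
    (μ : Fin (s + 1) → ℝ) (hμ : ∀ j, μ j + d ≠ 0)
    (hsum : ∑ j, μ j = -((r : ℝ) + 1) * d) :
    ∑ J ∈ (Finset.univ : Finset (Fin (s + 1))).powerset,
        (∏ j ∈ J, (-(μ j) / (μ j + d))) * (((r : ℤ) + 1 - (J.card : ℤ) : ℤ) : ℝ)
      = 0 :=
  weighted_euler_char_vanishing_general r s d hd μ hμ hsum
end

section
/- Let r, s ∈ ℕ with s ≤ r, let d ∈ ℝ with d ≠ 0, and let μ : Fin (s+1) → ℝ satisfy μ_j + d ≠ 0 for every j and Σ_j μ_j = −(r+1)·d. Let f := X^{r−s} · ∏_{j ∈ Fin (s+1)} (X − C(μ_j/(μ_j + d))) ∈ ℝ[X]. Then the formal derivative of f evaluated at 1 equals 0. -/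
open Finset Polynomial

/-
At `x = 1` the derivative of `X ^ k * g` is `k * g 1 + g' 1`, and the logarithmic derivative of
`∏ j, (X - C a_j)` at `1` is `∑ j, (1 - a_j)⁻¹`. With `a_j = μ_j / (μ_j + d)` each term equals
`(μ_j + d) / d`, so the sum is `(∑ μ_j) / d + (s + 1) = s - r`, which cancels `k = r - s`.
-/

theorem Polynomial.eval_derivative_prod_eq_mul_sum_div {K ι : Type*} [Field K] (s : Finset ι)
    (f : ι → K[X]) {x : K} (hf : ∀ i ∈ s, (f i).eval x ≠ 0) :
    (derivative (∏ i ∈ s, f i)).eval x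
      = (∏ i ∈ s, f i).eval x * ∑ i ∈ s, (derivative (f i)).eval x / (f i).eval x := by
  classical
  induction s using Finset.induction_on with
  | empty => simp
  | insert a s ha ih =>
    have hfa : (f a).eval x ≠ 0 := hf a (mem_insert_self a s)
    rw [prod_insert ha, sum_insert ha, derivative_mul, eval_add, eval_mul, eval_mul,
      ih fun i hi ↦ hf i (mem_insert_of_mem hi), eval_mul]
    field_simp

theorem Polynomial.eval_derivative_prod_X_sub_C {K ι : Type*} [Field K] (s : Finset ι)
    (a : ι → K) {x : K} (ha : ∀ i ∈ s, x ≠ a i) :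
    (derivative (∏ i ∈ s, (X - C (a i)))).eval x
      = (∏ i ∈ s, (X - C (a i))).eval x * ∑ i ∈ s, (x - a i)⁻¹ := by
  rw [eval_derivative_prod_eq_mul_sum_div s _ fun i hi ↦ by simpa [sub_eq_zero] using ha i hi]
  simp

theorem Polynomial.eval_one_derivative_X_pow_mul {R : Type*} [CommSemiring R] (k : ℕ)
    (p : R[X]) : (derivative (X ^ k * p)).eval 1 = k * p.eval 1 + (derivative p).eval 1 := by
  simp [derivative_mul, derivative_X_pow]

/-- The polynomial identity `f′(1) = 0` underlying the vanishing of the weighted Euler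
characteristic of a projective-space fiber: for
`f = X^{r−s} · ∏_{j ∈ Fin (s+1)} (X − C (μ_j/(μ_j + d)))` with `s ≤ r`, `d ≠ 0`,
`μ_j + d ≠ 0` and `Σ_j μ_j = −(r+1)·d`, the derivative of `f` evaluated at `1` is `0`. -/
theorem derivative_eval_one_vanishing (r s : ℕ) (hs : s ≤ r) (d : ℝ) (hd : d ≠ 0)
    (μ : Fin (s + 1) → ℝ) (hμ : ∀ j, μ j + d ≠ 0)
    (hsum : ∑ j, μ j = -((r : ℝ) + 1) * d) :
    Polynomial.eval 1 (Polynomial.derivative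
        ((Polynomial.X : ℝ[X]) ^ (r - s) *
          ∏ j : Fin (s + 1), (Polynomial.X - Polynomial.C (μ j / (μ j + d)))))
      = 0 := by
  have hgap : ∀ j, 1 - μ j / (μ j + d) = d / (μ j + d) := fun j ↦ by
    field_simp [hμ j]
    ring
  have hroot : ∀ j ∈ univ, (1 : ℝ) ≠ μ j / (μ j + d) := fun j _ ↦
    sub_ne_zero.mp (hgap j ▸ div_ne_zero hd (hμ j))
  have hlogDeriv : ∑ j, (1 - μ j / (μ j + d))⁻¹ = (s : ℝ) - r := by
    simp_rw [hgap, inv_div, add_div, div_self hd]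
    rw [sum_add_distrib, ← sum_div, hsum, sum_const, card_univ, Fintype.card_fin, nsmul_one]
    field_simp
    push_cast
    ring
  rw [eval_one_derivative_X_pow_mul, eval_derivative_prod_X_sub_C _ _ hroot, hlogDeriv,
    Nat.cast_sub hs]
  ring
end
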